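/- arXiv:1201.6481 — 2 statements merged into one kernel-verified Lean document; each statement's English description precedes it below -/
import Mathlib

section
/- (Supertropical Gram–Schmidt bound) Let B be a supertropically symmetric bilinear form on a supertropical vector space V over a supertropical semifield F. Let b₁,…,b_m ∈ V be pairwise g-orthogonal with each ⟨bⱼ,bⱼ⟩ ≠ 0, suppose the set {b₁,…,b_m} is pairwise weakly Cauchy-Schwartz, and choose tangible βⱼ ∈ T with βⱼ ≅_ν ⟨bⱼ,bⱼ⟩. For v ∈ V set v′ := v + Σⱼ (⟨v,bⱼ⟩/βⱼ)·bⱼ. Then ⟨v′, v′⟩ ⊨_gs ⟨v,v⟩ + Σⱼ ⟨v,bⱼ⟩(⟨v,bⱼ⟩ + ⟨bⱼ,v⟩)/βⱼ, with equality when B is strict. -/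
/-- A supertropical semifield (with an adjoined zero element), following
Izhakian–Knebusch–Rowen: a commutative semiring `F` together with an idempotent
additive and multiplicative ghost map `ν : F → F` whose fixed points are the
ghost elements (together with `0`), such that `a + b = ν a` when `ν a = ν b`
and `a + b ∈ {a, b}` otherwise, the tangible elements `T = F ∖ (G ∪ {0})`
form a multiplicative group, and `ν` maps `T` onto the nonzero ghosts. -/
class SupertropicalSemifield (F : Type*) extends CommSemiring F where
  nu : F → F
  nu_zero : nu 0 = 0
  nu_idem : ∀ a, nu (nu a) = nu a
  nu_add : ∀ a b, nu (a + b) = nu a + nu b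
  nu_mul : ∀ a b, nu (a * b) = nu a * nu b
  add_eq_nu : ∀ a b, nu a = nu b → a + b = nu a
  add_cases : ∀ a b, nu a ≠ nu b → a + b = a ∨ a + b = b
  tangible_inv : ∀ a, nu a ≠ a → ∃ b, nu b ≠ b ∧ a * b = 1
  nu_onto : ∀ g, nu g = g → g ≠ 0 → ∃ t, nu t ≠ t ∧ nu t = g

namespace Supertropical

open SupertropicalSemifield

variable (F : Type*) [SupertropicalSemifield F]

/-- `a` is ghost or zero (i.e. `a ∈ G ∪ {0}`, the fixed points of `ν`). -/
def Ghost0 (a : F) : Prop := nu a = a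

/-- `a` is tangible: `a ∈ T = F ∖ (G ∪ {0})`. -/
def Tangible (a : F) : Prop := nu a ≠ a

/-- The ghost-surpassing relation on `F`:  `b ⊨_gs a` iff `b = a + c` with `c` ghost or zero. -/
def GS (b a : F) : Prop := ∃ c, Ghost0 F c ∧ b = a + c

/-- `a ≥_ν b`. -/
def nuGE (a b : F) : Prop := nu a + nu b = nu a

/-- `a >_ν b`. -/
def nuGT (a b : F) : Prop := nuGE F a b ∧ nu a ≠ nu b

/-- `a ≅_ν b` (`ν`-matched). -/
def nuEq (a b : F) : Prop := nu a = nu b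

section VS

variable {V : Type*} [AddCommMonoid V] [Module F V]

/-- `v` lies in the ghost submodule `H₀ = eV`, `e = 1 + 1`. -/
def GhostV (v : V) : Prop := ∃ u : V, v = ((1 : F) + 1) • u

/-- The ghost-surpassing relation on a supertropical vector space:
`v ⊨_gs w` iff `v = w + h` with `h ∈ H₀`. -/
def GSV (v w : V) : Prop := ∃ h : V, GhostV F h ∧ v = w + h

variable {W : Type*} [AddCommMonoid W] [Module F W]

/-- A supertropical map `φ : V → W`: `φ(v + w) ⊨_gs φ(v) + φ(w)` and
`φ(a • v) = a • φ(v)` for tangible `a`. -/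
def STMap (φ : V → W) : Prop :=
  (∀ v w : V, GSV F (φ (v + w)) (φ v + φ w)) ∧
    ∀ a : F, Tangible F a → ∀ v : V, φ (a • v) = a • φ v

/-- A family of vectors is tropically independent if no linear combination with
tangible coefficients, not all zero, lies in the ghost submodule. -/
def TropIndep {m : ℕ} (v : Fin m → V) : Prop :=
  ∀ β : Fin m → F, (∀ i, Tangible F (β i) ∨ β i = 0) → (∃ i, β i ≠ 0) →
    ¬ GhostV F (∑ i, β i • v i)

/-- `S ⊆ V` has rank `r`: it contains `r` tropically independent vectors, and no
tropically independent family in `S` has more than `r` members. -/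
def HasRank (S : Set V) (r : ℕ) : Prop :=
  (∃ v : Fin r → V, (∀ i, v i ∈ S) ∧ TropIndep F v) ∧
    ∀ (m : ℕ) (v : Fin m → V), (∀ i, v i ∈ S) → TropIndep F v → m ≤ r

/-- A supertropical bilinear form: a supertropical map in each variable. -/
def IsBilinear (B : V → V → F) : Prop :=
  (∀ w : V, STMap F (fun v => B v w)) ∧ ∀ v : V, STMap F (fun w => B v w)

/-- `B` is supertropically symmetric: `⟨v,w⟩ + ⟨w,v⟩` is ghost (or zero) for all `v, w`. -/
def SupSymmetric (B : V → V → F) : Prop := ∀ v w : V, Ghost0 F (B v w + B w v)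

/-- A strict bilinear form. -/
def IsStrict (B : V → V → F) : Prop :=
  ∀ (a₁ a₂ b₁ b₂ : F) (v₁ v₂ w₁ w₂ : V),
    B (a₁ • v₁ + a₂ • v₂) (b₁ • w₁ + b₂ • w₂) =
      a₁ * b₁ * B v₁ w₁ + a₁ * b₂ * B v₁ w₂ + a₂ * b₁ * B v₂ w₁ + a₂ * b₂ * B v₂ w₂

/-- `v` and `w` are compatible: `⟨v,v⟩ + ⟨w,w⟩ ≥_ν ⟨v,w⟩ + ⟨w,v⟩`. -/
def Compatible (B : V → V → F) (v w : V) : Prop :=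
  nuGE F (B v v + B w w) (B v w + B w v)

/-- `v` and `w` are strictly compatible. -/
def StrictlyCompatible (B : V → V → F) (v w : V) : Prop :=
  Compatible F B v w ∧
    (nuEq F (B v v) (B w w) ∨ nuGT F (B v v + B w w) (B v w + B w v))

/-- The pair `{v, w}` is weakly Cauchy-Schwartz: `⟨v,v⟩⟨w,w⟩ ≥_ν ⟨v,w⟩² + ⟨w,v⟩²`. -/
def WeakCS (B : V → V → F) (v w : V) : Prop :=
  nuGE F (B v v * B w w) (B v w ^ 2 + B w v ^ 2)

/-- The pair `{v, w}` is Cauchy-Schwartz: `⟨v,v⟩⟨w,w⟩ >_ν ⟨v,w⟩² + ⟨w,v⟩²`. -/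
def CS (B : V → V → F) (v w : V) : Prop :=
  nuGT F (B v v * B w w) (B v w ^ 2 + B w v ^ 2)

end VS

/-- The permanent (supertropical determinant) of a square matrix. -/
def perm {n : ℕ} (A : Matrix (Fin n) (Fin n) F) : F :=
  ∑ σ : Equiv.Perm (Fin n), ∏ i, A i (σ i)

/-- The supertropical adjoint matrix: the transpose of the matrix of cofactors. -/
def adjSup {n : ℕ} (A : Matrix (Fin (n + 1)) (Fin (n + 1)) F) :
    Matrix (Fin (n + 1)) (Fin (n + 1)) F :=
  Matrix.of fun i j => perm F (A.submatrix (Fin.succAbove j) (Fin.succAbove i))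

end Supertropical

section AuxSupertropical

open Supertropical SupertropicalSemifield Finset

variable {F : Type*} [SupertropicalSemifield F]

lemma aux_nu_self (a : F) : a + a = nu a := add_eq_nu a a rfl

lemma aux_gh_iff (a : F) : Ghost0 F a ↔ a + a = a := by
  rw [aux_nu_self]; exact Iff.rfl

lemma aux_gh_zero : Ghost0 F (0 : F) := nu_zero

lemma aux_gh_nu (a : F) : Ghost0 F (nu a) := nu_idem a

lemma aux_gh_add {a b : F} (ha : Ghost0 F a) (hb : Ghost0 F b) : Ghost0 F (a + b) := by
  unfold Ghost0 at *
  rw [nu_add, ha, hb]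

lemma aux_gh_mul (a : F) {g : F} (hg : Ghost0 F g) : Ghost0 F (a * g) := by
  rw [aux_gh_iff] at hg ⊢
  calc a * g + a * g = a * (g + g) := by ring
    _ = a * g := by rw [hg]

lemma aux_gh_sum {ι : Type*} {s : Finset ι} {f : ι → F}
    (h : ∀ i ∈ s, Ghost0 F (f i)) : Ghost0 F (∑ i ∈ s, f i) :=
  Finset.sum_induction f (Ghost0 F) (fun _ _ ha hb => aux_gh_add ha hb) aux_gh_zero h

lemma aux_nuGE_refl (a : F) : nuGE F a a := by
  unfold nuGE; rw [aux_nu_self, nu_idem]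

lemma aux_nuGE_zero (a : F) : nuGE F a 0 := by
  unfold nuGE; rw [nu_zero, add_zero]

lemma aux_nuGE_trans {a b c : F} (h1 : nuGE F a b) (h2 : nuGE F b c) : nuGE F a c := by
  unfold nuGE at *
  calc nu a + nu c = nu a + nu b + nu c := by rw [h1]
    _ = nu a + (nu b + nu c) := by rw [add_assoc]
    _ = nu a + nu b := by rw [h2]
    _ = nu a := h1

lemma aux_nuGE_add_left (a b : F) : nuGE F (a + b) a := by
  unfold nuGE
  rw [nu_add]
  calc nu a + nu b + nu a = (nu a + nu a) + nu b := by ring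
    _ = nu a + nu b := by rw [aux_nu_self, nu_idem]

lemma aux_nuGE_add_right (a b : F) : nuGE F (a + b) b := by
  rw [add_comm]; exact aux_nuGE_add_left b a

lemma aux_nuGE_add {a b c : F} (h1 : nuGE F a b) (h2 : nuGE F a c) : nuGE F a (b + c) := by
  unfold nuGE at *
  rw [nu_add, ← add_assoc, h1, h2]

lemma aux_nuGE_sum {ι : Type*} {s : Finset ι} {f : ι → F} {a : F}
    (h : ∀ i ∈ s, nuGE F a (f i)) : nuGE F a (∑ i ∈ s, f i) :=
  Finset.sum_induction f (nuGE F a) (fun _ _ hx hy => aux_nuGE_add hx hy) (aux_nuGE_zero a) h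

lemma aux_nuGE_mem {ι : Type*} {s : Finset ι} (f : ι → F) {j : ι} (hj : j ∈ s) :
    nuGE F (∑ i ∈ s, f i) (f j) := by
  classical
  rw [← Finset.add_sum_erase s f hj]
  exact aux_nuGE_add_left _ _

lemma aux_nuGE_mul {a b c d : F} (h1 : nuGE F a b) (h2 : nuGE F c d) :
    nuGE F (a * c) (b * d) := by
  unfold nuGE at *
  rw [nu_mul, nu_mul]
  have e1 : nu a * nu c = nu a * nu c + nu b * nu c := by
    conv_lhs => rw [← h1]
    rw [add_mul]
  have e2 : nu b * nu c = nu b * nu c + nu b * nu d := by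
    conv_lhs => rw [← h2]
    rw [mul_add]
  calc nu a * nu c + nu b * nu d
      = (nu a * nu c + nu b * nu c) + nu b * nu d := by rw [← e1]
    _ = nu a * nu c + (nu b * nu c + nu b * nu d) := by rw [add_assoc]
    _ = nu a * nu c + nu b * nu c := by rw [← e2]
    _ = nu a * nu c := by rw [← e1]

lemma aux_absorb {a c : F} (ha : Ghost0 F a) (h : nuGE F a c) : a + c = a := by
  by_cases hv : nu a = nu c
  · rw [add_eq_nu a c hv, ha]
  · rcases add_cases a c hv with h' | h'
    · exact h'
    · exfalso
      apply hv
      have hn := congrArg nu h'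
      rw [nu_add] at hn
      exact h.symm.trans hn

lemma aux_antisymm {a b : F} (h1 : nuGE F a b) (h2 : nuGE F b a) : nu a = nu b := by
  unfold nuGE at *
  rw [← h1, add_comm]
  exact h2

lemma aux_total (a b : F) : nuGE F a b ∨ nuGE F b a := by
  by_cases hv : nu a = nu b
  · left; unfold nuGE; rw [hv, aux_nu_self, nu_idem]
  · rcases add_cases (nu a) (nu b) (by rw [nu_idem, nu_idem]; exact hv) with h | h
    · left; exact h
    · right; unfold nuGE; rw [add_comm]; exact h

lemma aux_nu_eq_zero {x : F} (h : nu x = 0) : x = 0 := by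
  by_cases hx : nu x = x
  · rw [← hx, h]
  · obtain ⟨y, _, hxy⟩ := tangible_inv x hx
    have h1 : nu (1 : F) = 0 := by rw [← hxy, nu_mul, h, zero_mul]
    have hna : nu x = 0 := h
    have hx0 : x + 0 = nu x := add_eq_nu x 0 (by rw [hna, nu_zero])
    rw [add_zero, hna] at hx0
    rw [hx0]

lemma aux_nu_one_mul (x : F) : nu (1 : F) * nu x = nu x := by
  rw [← aux_nu_self 1, add_mul, one_mul, aux_nu_self, nu_idem]

lemma aux_nu_cancel {c a b : F} (hc : nu c ≠ 0) (h : nu c * nu a = nu c * nu b) :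
    nu a = nu b := by
  obtain ⟨t, ht, htc⟩ := nu_onto (nu c) (nu_idem c) hc
  obtain ⟨s, _, hts⟩ := tangible_inv t ht
  have key : ∀ x : F, nu s * (nu c * nu x) = nu x := by
    intro x
    rw [← htc, ← mul_assoc, ← nu_mul, mul_comm s t, hts]
    exact aux_nu_one_mul x
  calc nu a = nu s * (nu c * nu a) := (key a).symm
    _ = nu s * (nu c * nu b) := by rw [h]
    _ = nu b := key b

lemma aux_sqrt {x y c : F} (h : nuGE F (x * y) (c * c)) : nuGE F (x + y) c := by
  rcases aux_total x c with hx | hx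
  · exact aux_nuGE_trans (aux_nuGE_add_left x y) hx
  rcases aux_total y c with hy | hy
  · exact aux_nuGE_trans (aux_nuGE_add_right x y) hy
  by_cases hc : nu c = 0
  · unfold nuGE; rw [hc, add_zero]
  · have h1 : nuGE F (c * c) (x * y) := aux_nuGE_mul hx hy
    have heq : nu (c * c) = nu (x * y) := aux_antisymm h1 h
    have h2 : nuGE F (c * c) (c * y) := aux_nuGE_mul (aux_nuGE_refl c) hy
    have h3 : nuGE F (c * y) (c * c) := by
      have h3' : nuGE F (c * y) (x * y) := aux_nuGE_mul hx (aux_nuGE_refl y)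
      unfold nuGE at h3' ⊢
      rw [heq]
      exact h3'
    have heq2 : nu (c * c) = nu (c * y) := aux_antisymm h2 h3
    rw [nu_mul, nu_mul] at heq2
    have hcy : nu c = nu y := aux_nu_cancel hc heq2
    have hyc : nuGE F y c := by
      unfold nuGE
      rw [← hcy, aux_nu_self, nu_idem]
    exact aux_nuGE_trans (aux_nuGE_add_right x y) hyc

end AuxSupertropical

section AuxMaps

open Supertropical SupertropicalSemifield Finset

variable {F : Type*} [SupertropicalSemifield F]
variable {V : Type*} [AddCommMonoid V] [Module F V]

lemma aux_gh_of_ghostV {h : F} (hg : GhostV F h) : Ghost0 F h := by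
  obtain ⟨u, rfl⟩ := hg
  rw [aux_gh_iff, smul_eq_mul]
  have he : ((1 : F) + 1) + (1 + 1) = 1 + 1 := by
    rw [aux_nu_self (1 : F), aux_nu_self, nu_idem]
  calc (1 + 1) * u + (1 + 1) * u = (((1 : F) + 1) + (1 + 1)) * u := by ring
    _ = (1 + 1) * u := by rw [he]

lemma aux_st_add {φ : V → F} (h : STMap F φ) (x y : V) :
    ∃ c, Ghost0 F c ∧ φ (x + y) = φ x + φ y + c := by
  obtain ⟨g, hg, he⟩ := h.1 x y
  exact ⟨g, aux_gh_of_ghostV hg, he⟩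

lemma aux_st_zero {φ : V → F} (h : STMap F φ) : Ghost0 F (φ 0) := by
  obtain ⟨c, hc, he⟩ := aux_st_add h 0 0
  rw [add_zero] at he
  rw [aux_nu_self (φ 0)] at he
  have h2 : nu (φ 0) = nu (φ 0) + nu c := by
    conv_lhs => rw [he]
    rw [nu_add, nu_idem]
  have h3 : nu (φ 0) + c = nu (φ 0) :=
    aux_absorb (aux_gh_nu _) (by unfold nuGE; rw [nu_idem]; exact h2.symm)
  rw [h3] at he
  exact he.symm

lemma aux_st_smul {φ : V → F} (h : STMap F φ) (a : F) (x : V) :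
    ∃ c, Ghost0 F c ∧ φ (a • x) = a * φ x + c := by
  by_cases ha : nu a = a
  · by_cases ha0 : a = 0
    · refine ⟨φ 0, aux_st_zero h, ?_⟩
      rw [ha0, zero_smul, zero_mul, zero_add]
    · obtain ⟨t, ht, htc⟩ := nu_onto a ha ha0
      obtain ⟨c, hc, he⟩ := aux_st_add h (t • x) (t • x)
      have hts : φ (t • x) = t * φ x := by
        have := h.2 t ht x
        rwa [smul_eq_mul] at this
      refine ⟨c, hc, ?_⟩
      have hax : a • x = t • x + t • x := by
        rw [← add_smul, aux_nu_self, htc]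
      rw [hax, he, hts, ← add_mul, aux_nu_self, htc]
  · refine ⟨0, aux_gh_zero, ?_⟩
    rw [add_zero, ← smul_eq_mul]
    exact h.2 a ha x

lemma aux_st_sum {ι : Type*} {φ : V → F} (h : STMap F φ) (s : Finset ι) (f : ι → V) :
    ∃ c, Ghost0 F c ∧ φ (∑ i ∈ s, f i) = (∑ i ∈ s, φ (f i)) + c := by
  induction s using Finset.cons_induction with
  | empty => exact ⟨φ 0, aux_st_zero h, by simp⟩
  | cons a s ha ih =>
    obtain ⟨c1, hc1, he1⟩ := ih
    obtain ⟨c2, hc2, he2⟩ := aux_st_add h (f a) (∑ i ∈ s, f i)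
    refine ⟨c2 + c1, aux_gh_add hc2 hc1, ?_⟩
    rw [Finset.sum_cons, Finset.sum_cons, he2, he1]
    ring

lemma aux_st_sum_smul {ι : Type*} {φ : V → F} (h : STMap F φ) (s : Finset ι)
    (α : ι → F) (f : ι → V) :
    ∃ c, Ghost0 F c ∧ φ (∑ i ∈ s, α i • f i) = (∑ i ∈ s, α i * φ (f i)) + c := by
  obtain ⟨c1, hc1, he1⟩ := aux_st_sum h s (fun i => α i • f i)
  choose cs hcs hes using fun i => aux_st_smul h (α i) (f i)
  refine ⟨(∑ i ∈ s, cs i) + c1, aux_gh_add (aux_gh_sum (fun i _ => hcs i)) hc1, ?_⟩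
  rw [he1, Finset.sum_congr rfl (fun i _ => hes i), Finset.sum_add_distrib]
  ring

variable {B : V → V → F}

lemma aux_strict_add_left (h : IsStrict F B) (x y w : V) :
    B (x + y) w = B x w + B y w := by
  have := h 1 1 1 0 x y w 0
  simpa using this

lemma aux_strict_add_right (h : IsStrict F B) (u x y : V) :
    B u (x + y) = B u x + B u y := by
  have := h 1 0 1 1 u 0 x y
  simpa using this

lemma aux_strict_smul_left (h : IsStrict F B) (a : F) (x w : V) :
    B (a • x) w = a * B x w := by
  have := h a 0 1 0 x 0 w 0
  simpa using this

lemma aux_strict_smul_right (h : IsStrict F B) (u : V) (a : F) (y : V) :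
    B u (a • y) = a * B u y := by
  have := h 1 0 a 0 u 0 y 0
  simpa using this

lemma aux_strict_sum_left (h : IsStrict F B) {ι : Type*} (s : Finset ι) (f : ι → V) (w : V) :
    B (∑ i ∈ s, f i) w = ∑ i ∈ s, B (f i) w := by
  induction s using Finset.cons_induction with
  | empty =>
    simp only [Finset.sum_empty]
    have := h 0 0 1 0 0 0 w 0
    simpa using this
  | cons a s ha ih =>
    rw [Finset.sum_cons, Finset.sum_cons, aux_strict_add_left h, ih]

lemma aux_strict_sum_right (h : IsStrict F B) {ι : Type*} (u : V) (s : Finset ι) (f : ι → V) :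
    B u (∑ i ∈ s, f i) = ∑ i ∈ s, B u (f i) := by
  induction s using Finset.cons_induction with
  | empty =>
    simp only [Finset.sum_empty]
    have := h 1 0 0 0 u 0 0 0
    simpa using this
  | cons a s ha ih =>
    rw [Finset.sum_cons, Finset.sum_cons, aux_strict_add_right h, ih]

end AuxMaps

open SupertropicalSemifield in
open Supertropical in
/-- supertropical Gram-Schmidt bound: With `b₁,…,b_m` pairwise
g-orthogonal, pairwise weakly Cauchy-Schwartz, `⟨bⱼ,bⱼ⟩ ≠ 0`, `βⱼ` tangible
with `βⱼ ≅_ν ⟨bⱼ,bⱼ⟩`, and `v′ = v + Σⱼ (⟨v,bⱼ⟩/βⱼ) bⱼ`, one has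
`⟨v′,v′⟩ ⊨_gs ⟨v,v⟩ + Σⱼ ⟨v,bⱼ⟩(⟨v,bⱼ⟩ + ⟨bⱼ,v⟩)/βⱼ`, with equality when `B`
is strict. -/
theorem stmt14 {F : Type*} [SupertropicalSemifield F]
    {V : Type*} [AddCommMonoid V] [Module F V]
    (B : V → V → F) (hB : IsBilinear F B) (hsym : SupSymmetric F B)
    {m : ℕ} (b : Fin m → V)
    (horth : ∀ i j, i ≠ j → Ghost0 F (B (b i) (b j)))
    (hnz : ∀ j, B (b j) (b j) ≠ 0)
    (hwcs : ∀ i j, i ≠ j → WeakCS F B (b i) (b j))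
    (β βinv : Fin m → F)
    (hβt : ∀ j, Tangible F (β j))
    (hβν : ∀ j, nuEq F (β j) (B (b j) (b j)))
    (hβinv : ∀ j, β j * βinv j = 1)
    (v : V) :
    GS F (B (v + ∑ j, (B v (b j) * βinv j) • b j) (v + ∑ j, (B v (b j) * βinv j) • b j))
        (B v v + ∑ j, B v (b j) * (B v (b j) + B (b j) v) * βinv j) ∧
      (IsStrict F B →
        B (v + ∑ j, (B v (b j) * βinv j) • b j) (v + ∑ j, (B v (b j) * βinv j) • b j) =
          B v v + ∑ j, B v (b j) * (B v (b j) + B (b j) v) * βinv j) := by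
  classical
  obtain ⟨α, hαd⟩ : ∃ α : Fin m → F, ∀ j, α j = B v (b j) * βinv j := ⟨_, fun _ => rfl⟩
  obtain ⟨t, htd⟩ : ∃ t : Fin m → F, ∀ j, t j = B v (b j) * (B v (b j) + B (b j) v) * βinv j :=
    ⟨_, fun _ => rfl⟩
  obtain ⟨o, hod⟩ : ∃ o : Fin m → F,
      ∀ j, o j = ∑ i ∈ Finset.univ.erase j, α j * (α i * B (b j) (b i)) := ⟨_, fun _ => rfl⟩
  have hβν' : ∀ j, nu (β j) = nu (B (b j) (b j)) := hβν
  simp only [← hαd, ← htd]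
  set S : V := ∑ j, α j • b j with hS
  -- basic ghost facts
  have ght : ∀ j, Ghost0 F (t j) := by
    intro j
    have h' : t j = (B v (b j) * βinv j) * (B v (b j) + B (b j) v) := by rw [htd j]; ring
    rw [h']
    exact aux_gh_mul _ (hsym v (b j))
  have gho : ∀ j, Ghost0 F (o j) := by
    intro j
    rw [hod j]
    exact aux_gh_sum fun i hi =>
      aux_gh_mul _ (aux_gh_mul _ (horth j i (Finset.ne_of_mem_erase hi).symm))
  have hα_nu : ∀ j, nu (α j) = nu (B v (b j)) * nu (βinv j) := fun j => by
    rw [hαd j, nu_mul]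
  have hq_nu : ∀ j, nu (α j * (α j * B (b j) (b j))) = nu (α j * B v (b j)) := by
    intro j
    symm
    calc nu (α j * B v (b j)) = nu (α j * B v (b j) * (β j * βinv j)) := by
          rw [hβinv j, mul_one]
      _ = nu (α j) * nu (B v (b j)) * (nu (β j) * nu (βinv j)) := by
          rw [nu_mul, nu_mul, nu_mul]
      _ = nu (α j) * (nu (B v (b j)) * nu (βinv j)) * nu (B (b j) (b j)) := by
          rw [hβν' j]; ring
      _ = nu (α j) * nu (α j) * nu (B (b j) (b j)) := by rw [← hα_nu j]
      _ = nu (α j * (α j * B (b j) (b j))) := by rw [nu_mul, nu_mul]; ring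
  have htsum : ∀ j, t j = α j * B v (b j) + α j * B (b j) v := by
    intro j; rw [htd j, hαd j]; ring
  have hge : ∀ j, nuGE F (t j) (α j * (α j * B (b j) (b j))) := by
    intro j
    unfold nuGE
    rw [hq_nu j, htsum j]
    exact aux_nuGE_add_left _ _
  have htq : ∀ j, t j + α j * (α j * B (b j) (b j)) = t j :=
    fun j => aux_absorb (ght j) (hge j)
  -- the per-term identity
  have hterm : ∀ j, α j * B v (b j) + α j * (B (b j) v + ∑ i, α i * B (b j) (b i))
      = t j + o j := by
    intro j
    have hsplit : (∑ i, α i * B (b j) (b i))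
        = α j * B (b j) (b j) + ∑ i ∈ Finset.univ.erase j, α i * B (b j) (b i) :=
      (Finset.add_sum_erase _ _ (Finset.mem_univ j)).symm
    have hoj : o j = α j * ∑ i ∈ Finset.univ.erase j, α i * B (b j) (b i) := by
      rw [hod j, Finset.mul_sum]
    have h1 : α j * B v (b j) + α j * (B (b j) v + ∑ i, α i * B (b j) (b i))
        = (t j + α j * (α j * B (b j) (b j))) + o j := by
      rw [hsplit, htsum j, hoj]
      ring
    rw [h1, htq j]
  -- the common algebraic rearrangement
  have hX : (B v v + (∑ j, α j * B v (b j))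
        + ∑ j, α j * (B (b j) v + ∑ i, α i * B (b j) (b i)))
      = (B v v + ∑ j, t j) + ∑ j, o j := by
    calc B v v + (∑ j, α j * B v (b j))
          + ∑ j, α j * (B (b j) v + ∑ i, α i * B (b j) (b i))
        = B v v + ∑ j, (α j * B v (b j)
            + α j * (B (b j) v + ∑ i, α i * B (b j) (b i))) := by
          rw [Finset.sum_add_distrib]; ring
      _ = B v v + ∑ j, (t j + o j) := by
          rw [Finset.sum_congr rfl fun j _ => hterm j]
      _ = (B v v + ∑ j, t j) + ∑ j, o j := by
          rw [Finset.sum_add_distrib]; ring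
  constructor
  · -- general supertropical expansion
    obtain ⟨c1, g1, e1⟩ := aux_st_add (hB.1 (v + S)) v S
    have e1' : B (v + S) (v + S) = B v (v + S) + B S (v + S) + c1 := e1
    obtain ⟨c2, g2, e2⟩ := aux_st_add (hB.2 v) v S
    have e2' : B v (v + S) = B v v + B v S + c2 := e2
    obtain ⟨c3, g3, e3⟩ := aux_st_sum_smul (hB.2 v) Finset.univ α b
    have e3' : B v S = (∑ j, α j * B v (b j)) + c3 := e3
    obtain ⟨c4, g4, e4⟩ := aux_st_sum_smul (hB.1 (v + S)) Finset.univ α b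
    have e4' : B S (v + S) = (∑ j, α j * B (b j) (v + S)) + c4 := e4
    choose c5 g5 e5 using fun j => aux_st_add (hB.2 (b j)) v S
    choose c6 g6 e6 using fun j => aux_st_sum_smul (hB.2 (b j)) Finset.univ α b
    have e5' : ∀ j, B (b j) (v + S) = B (b j) v + B (b j) S + c5 j := e5
    have e6' : ∀ j, B (b j) S = (∑ i, α i * B (b j) (b i)) + c6 j := e6
    have e8 : (∑ j, α j * B (b j) (v + S))
        = (∑ j, α j * (B (b j) v + ∑ i, α i * B (b j) (b i)))
          + ∑ j, α j * (c6 j + c5 j) := by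
      rw [Finset.sum_congr rfl fun j _ => (by rw [e5' j, e6' j]; ring :
        α j * B (b j) (v + S)
          = α j * (B (b j) v + ∑ i, α i * B (b j) (b i)) + α j * (c6 j + c5 j)),
        Finset.sum_add_distrib]
    have hexp : B (v + S) (v + S)
        = (B v v + (∑ j, α j * B v (b j))
            + ∑ j, α j * (B (b j) v + ∑ i, α i * B (b j) (b i)))
          + (c3 + c2 + (∑ j, α j * (c6 j + c5 j)) + c4 + c1) := by
      rw [e1', e2', e3', e4', e8]
      ring
    refine ⟨(∑ j, o j) + (c3 + c2 + (∑ j, α j * (c6 j + c5 j)) + c4 + c1), ?_, ?_⟩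
    · exact aux_gh_add (aux_gh_sum fun j _ => gho j)
        (aux_gh_add (aux_gh_add (aux_gh_add (aux_gh_add g3 g2)
          (aux_gh_sum fun j _ => aux_gh_mul _ (aux_gh_add (g6 j) (g5 j)))) g4) g1)
    · rw [hexp, hX]
      ring
  · -- strict case
    intro hst
    have hbS : ∀ u : V, B u S = ∑ i, α i * B u (b i) := by
      intro u
      rw [hS, aux_strict_sum_right hst]
      exact Finset.sum_congr rfl fun i _ => aux_strict_smul_right hst u (α i) (b i)
    have hstr : B (v + S) (v + S)
        = B v v + (∑ j, α j * B v (b j))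
          + ∑ j, α j * (B (b j) v + ∑ i, α i * B (b j) (b i)) := by
      calc B (v + S) (v + S) = B v (v + S) + B S (v + S) := aux_strict_add_left hst v S (v + S)
        _ = (B v v + B v S) + B S (v + S) := by rw [aux_strict_add_right hst v v S]
        _ = (B v v + ∑ j, α j * B v (b j)) + B S (v + S) := by rw [hbS v]
        _ = (B v v + ∑ j, α j * B v (b j)) + ∑ j, α j * B (b j) (v + S) := by
            rw [hS, aux_strict_sum_left hst, Finset.sum_congr rfl fun j _ =>
              aux_strict_smul_left hst (α j) (b j) _]
        _ = B v v + (∑ j, α j * B v (b j))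
              + ∑ j, α j * (B (b j) v + ∑ i, α i * B (b j) (b i)) := by
            rw [Finset.sum_congr rfl fun j _ => (by
              rw [aux_strict_add_right hst (b j) v S, hbS (b j)] :
              α j * B (b j) (v + S)
                = α j * (B (b j) v + ∑ i, α i * B (b j) (b i)))]
    have hTq : ∀ j i, i ≠ j → nuGE F (∑ k, t k) (α j * (α i * B (b j) (b i))) := by
      intro j i hne
      have hw : nuGE F (B (b j) (b j) * B (b i) (b i)) (B (b j) (b i) * B (b j) (b i)) := by
        have h1 : nuGE F (B (b j) (b j) * B (b i) (b i)) (B (b j) (b i) ^ 2) :=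
          aux_nuGE_trans (hwcs j i hne.symm) (aux_nuGE_add_left _ _)
        rwa [pow_two] at h1
      have hd : nuGE F ((α j * (α j * B (b j) (b j))) * (α i * (α i * B (b i) (b i))))
          ((α j * (α i * B (b j) (b i))) * (α j * (α i * B (b j) (b i)))) := by
        have e2 : (α j * (α j * B (b j) (b j))) * (α i * (α i * B (b i) (b i)))
            = (α j * α j * (α i * α i)) * (B (b j) (b j) * B (b i) (b i)) := by ring
        have e1 : (α j * (α i * B (b j) (b i))) * (α j * (α i * B (b j) (b i)))
            = (α j * α j * (α i * α i)) * (B (b j) (b i) * B (b j) (b i)) := by ring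
        rw [e1, e2]
        exact aux_nuGE_mul (aux_nuGE_refl _) hw
      have hT : nuGE F ((∑ k, t k) * (∑ k, t k))
          ((α j * (α i * B (b j) (b i))) * (α j * (α i * B (b j) (b i)))) :=
        aux_nuGE_trans (aux_nuGE_mul
          (aux_nuGE_trans (aux_nuGE_mem t (Finset.mem_univ j)) (hge j))
          (aux_nuGE_trans (aux_nuGE_mem t (Finset.mem_univ i)) (hge i))) hd
      have hs' := aux_sqrt hT
      unfold nuGE at hs' ⊢
      rwa [aux_nu_self, nu_idem] at hs'
    have hTge : nuGE F (∑ j, t j) (∑ j, o j) :=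
      aux_nuGE_sum fun j _ => by
        rw [hod j]
        exact aux_nuGE_sum fun i hi => hTq j i (Finset.ne_of_mem_erase hi)
    have hTO : (∑ j, t j) + ∑ j, o j = ∑ j, t j :=
      aux_absorb (aux_gh_sum fun j _ => ght j) hTge
    rw [hstr, hX, add_assoc, hTO]
end

section
/- Let B be a strict supertropically symmetric bilinear form on a supertropical vector space V over a supertropical semifield F. Let b₁,…,b_m ∈ V be pairwise g-orthogonal with each ⟨bⱼ,bⱼ⟩ ≠ 0, the set {b₁,…,b_m} pairwise weakly Cauchy-Schwartz, and choose tangible βⱼ with βⱼ ≅_ν ⟨bⱼ,bⱼ⟩. Let v ∈ V be g-nonisotropic and set v′ := v + Σⱼ (⟨v,bⱼ⟩/βⱼ)·bⱼ. If ⟨v,v⟩ >_ν Σⱼ (⟨v,bⱼ⟩ + ⟨bⱼ,v⟩)²/βⱼ — which holds in particular whenever {v, bⱼ} is Cauchy-Schwartz for each j — then ⟨v′, v′⟩ = ⟨v,v⟩; in particular v′ is g-nonisotropic. -/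
namespace Supertropical

open SupertropicalSemifield

variable (F : Type*) [SupertropicalSemifield F]

open SupertropicalSemifield

export SupertropicalSemifield (nu nu_zero nu_idem nu_add nu_mul add_eq_nu add_cases tangible_inv nu_onto)

variable {F : Type*} [SupertropicalSemifield F]

lemma gadd (a : F) : nu a + nu a = nu a := by
  have := add_eq_nu (nu a) (nu a) rfl; rwa [nu_idem] at this

lemma ge_refl (a : F) : nuGE F a a := gadd a

lemma ge_total (a b : F) : nuGE F a b ∨ nuGE F b a := by
  unfold nuGE
  by_cases h : nu a = nu b
  · left; rw [h, gadd]
  · have h2 : nu (nu a) ≠ nu (nu b) := by rwa [nu_idem, nu_idem]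
    rcases add_cases (nu a) (nu b) h2 with h3 | h3
    · left; exact h3
    · right; rw [add_comm]; exact h3

lemma ge_trans {a b c : F} (h1 : nuGE F a b) (h2 : nuGE F b c) : nuGE F a c := by
  unfold nuGE at *
  calc nu a + nu c = nu a + nu b + nu c := by rw [h1]
    _ = nu a + (nu b + nu c) := by rw [add_assoc]
    _ = nu a + nu b := by rw [h2]
    _ = nu a := h1

lemma add_of_gt {a b : F} (h : nuGT F a b) : a + b = a := by
  rcases add_cases a b h.2 with h3 | h3
  · exact h3
  · exfalso
    apply h.2
    have : nu a + nu b = nu b := by rw [← nu_add, h3]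
    rw [← h.1, this]

lemma nu_add_eq_left {a b : F} (h : nuGE F a b) : nu (a + b) = nu a := by
  rw [nu_add]; exact h

lemma ge_add_left (a b : F) : nuGE F (a + b) a := by
  unfold nuGE
  rw [nu_add, add_assoc, add_comm (nu b), ← add_assoc, gadd]

lemma ge_add_right (a b : F) : nuGE F (a + b) b := by
  rw [add_comm]; exact ge_add_left b a

lemma ge_add {a b c : F} (h1 : nuGE F a b) (h2 : nuGE F a c) : nuGE F a (b + c) := by
  unfold nuGE at *
  rw [nu_add, ← add_assoc, h1, h2]

lemma ge_mul {a b c d : F} (h1 : nuGE F a b) (h2 : nuGE F c d) : nuGE F (a * c) (b * d) := by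
  unfold nuGE at *
  rw [nu_mul, nu_mul]
  calc nu a * nu c + nu b * nu d
      = (nu a + nu b) * (nu c + nu d) + nu b * nu d := by rw [h1, h2]
    _ = nu a * nu c + nu a * nu d + nu b * nu c + (nu b * nu d + nu b * nu d) := by ring
    _ = nu a * nu c + nu a * nu d + nu b * nu c + nu b * nu d := by
        rw [← nu_mul b d, gadd (b * d)]
    _ = (nu a + nu b) * (nu c + nu d) := by ring
    _ = nu a * nu c := by rw [h1, h2]

lemma nu_add_split (a b : F) : nu a + nu b = nu a ∨ nu a + nu b = nu b := by
  by_cases h : nu a = nu b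
  · left; rw [h, gadd]
  · have h2 : nu (nu a) ≠ nu (nu b) := by rwa [nu_idem, nu_idem]
    exact add_cases (nu a) (nu b) h2

lemma gt_add {a b c : F} (h1 : nuGT F a b) (h2 : nuGT F a c) : nuGT F a (b + c) := by
  refine ⟨ge_add h1.1 h2.1, ?_⟩
  rw [nu_add]
  rcases nu_add_split b c with h | h <;> rw [h]
  exacts [h1.2, h2.2]

lemma gt_of_gt_ge {a b c : F} (h1 : nuGT F a b) (h2 : nuGE F b c) : nuGT F a c := by
  refine ⟨ge_trans h1.1 h2, ?_⟩
  intro h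
  apply h1.2
  have hba : nu b + nu a = nu b := by rw [h]; exact h2
  calc nu a = nu a + nu b := h1.1.symm
    _ = nu b + nu a := add_comm _ _
    _ = nu b := hba

lemma nu_cancel {a b c : F} (h : nu a ≠ 0) (h2 : nu a * nu b = nu a * nu c) :
    nu b = nu c := by
  obtain ⟨t, ht, htν⟩ := nu_onto (nu a) (nu_idem a) h
  obtain ⟨s, hs, hts⟩ := tangible_inv t ht
  have key : ∀ x : F, nu s * (nu a * nu x) = nu x := by
    intro x
    rw [← htν, ← nu_mul, ← nu_mul, ← mul_assoc, mul_comm s t, hts, one_mul]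
  calc nu b = nu s * (nu a * nu b) := (key b).symm
    _ = nu s * (nu a * nu c) := by rw [h2]
    _ = nu c := key c

lemma ge_of_sq {a b : F} (h : nuGE F (a * a) (b * b)) : nuGE F a b := by
  rcases ge_total a b with h1 | h1
  · exact h1
  -- b ≥ a
  have hba2 : nuGE F (b * b) (b * a) := ge_mul (ge_refl b) h1
  have hba3 : nuGE F (b * a) (a * a) := ge_mul h1 (ge_refl a)
  have e1 : nu (b * b) = nu (a * a) := by
    have g1 : nuGE F (b * b) (a * a) := ge_trans hba2 hba3
    calc nu (b * b) = nu (b * b) + nu (a * a) := g1.symm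
      _ = nu (a * a) + nu (b * b) := add_comm _ _
      _ = nu (a * a) := h
  have e2 : nu (b * b) = nu (b * a) := by
    calc nu (b * b) = nu (b * b) + nu (b * a) := hba2.symm
      _ = nu (b * a) + nu (b * b) := add_comm _ _
      _ = nu (b * a) + nu (a * a) := by rw [e1]
      _ = nu (b * a) := hba3
  by_cases hb0 : nu b = 0
  · -- then nu a = 0 too since b ≥ a
    have : nu b + nu a = nu b := h1
    rw [hb0, zero_add] at this
    unfold nuGE
    rw [this, hb0, add_zero]
  · have : nu b * nu b = nu b * nu a := by
      rw [← nu_mul, ← nu_mul, e2]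
    have hab : nu b = nu a := nu_cancel hb0 this
    unfold nuGE
    rw [hab, gadd]

open SupertropicalSemifield

variable {F : Type*} [SupertropicalSemifield F]

section Nontrivial
variable {t : F} (ht : Tangible F t)
include ht

lemma nu_one_ne_zero : nu (1 : F) ≠ 0 := by
  intro h1
  have hall : ∀ x : F, nu x = 0 := by
    intro x
    calc nu x = nu (x * 1) := by rw [mul_one]
      _ = nu x * nu 1 := nu_mul x 1
      _ = 0 := by rw [h1, mul_zero]
  have : t = 0 := by
    have := add_eq_nu t 0 (by rw [hall, nu_zero])
    rwa [add_zero, hall] at this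
  apply ht
  rw [this, nu_zero]

lemma eq_zero_of_nu_eq_zero {a : F} (h : nu a = 0) : a = 0 := by
  by_cases ha : Tangible F a
  · exfalso
    obtain ⟨s, hs, has⟩ := tangible_inv a ha
    apply nu_one_ne_zero ht
    rw [← has, nu_mul, h, zero_mul]
  · unfold Tangible at ha
    push_neg at ha
    rw [← ha, h]

lemma nu_tangible_ne_zero {a : F} (ha : Tangible F a) : nu a ≠ 0 := by
  intro h
  have := eq_zero_of_nu_eq_zero ht h
  apply ha
  rw [this, nu_zero]

end Nontrivial

lemma gt_mul_right {a b c : F} (hc : nu c ≠ 0) (h : nuGT F a b) : nuGT F (a * c) (b * c) := by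
  refine ⟨ge_mul h.1 (ge_refl c), ?_⟩
  intro he
  apply h.2
  rw [nu_mul, nu_mul, mul_comm (nu a), mul_comm (nu b)] at he
  exact nu_cancel hc he

lemma ge_congr {a a' b b' : F} (ha : nu a = nu a') (hb : nu b = nu b') :
    nuGE F a b → nuGE F a' b' := by
  unfold nuGE; rw [ha, hb]; exact id

lemma gt_congr {a a' b b' : F} (ha : nu a = nu a') (hb : nu b = nu b') :
    nuGT F a b → nuGT F a' b' := by
  unfold nuGT nuGE; rw [ha, hb]; exact id

lemma ge_sum {ι : Type*} {s : Finset ι} {a : F} {f : ι → F}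
    (h : ∀ i ∈ s, nuGE F a (f i)) : nuGE F a (∑ i ∈ s, f i) := by
  classical
  induction s using Finset.induction_on with
  | empty =>
      simp only [Finset.sum_empty]
      unfold nuGE; rw [nu_zero, add_zero]
  | @insert x s' hx ih =>
      rw [Finset.sum_insert hx]
      exact ge_add (h x (Finset.mem_insert_self x s'))
        (ih fun i hi => h i (Finset.mem_insert_of_mem hi))

lemma ge_sum_term {ι : Type*} {s : Finset ι} {f : ι → F} {j : ι} (hj : j ∈ s) :
    nuGE F (∑ i ∈ s, f i) (f j) := by
  classical
  rw [← Finset.add_sum_erase s f hj]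
  exact ge_add_left _ _

lemma gt_sum {ι : Type*} {s : Finset ι} {a : F} {f : ι → F} (ha : nu a ≠ 0)
    (h : ∀ i ∈ s, nuGT F a (f i)) : nuGT F a (∑ i ∈ s, f i) := by
  classical
  induction s using Finset.induction_on with
  | empty =>
      simp only [Finset.sum_empty]
      refine ⟨?_, ?_⟩
      · unfold nuGE; rw [nu_zero, add_zero]
      · rw [nu_zero]; exact ha
  | @insert x s' hx ih =>
      rw [Finset.sum_insert hx]
      exact gt_add (h x (Finset.mem_insert_self x s'))
        (ih fun i hi => h i (Finset.mem_insert_of_mem hi))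

/-- `ν(xy) ≤ ν(x² + y²)`. -/
lemma ge_sq_add_sq_mul (x y : F) : nuGE F (x * x + y * y) (x * y) := by
  rcases ge_total x y with h | h
  · exact ge_trans (ge_add_left _ _) (ge_mul (ge_refl x) h)
  · exact ge_trans (ge_add_right _ _) (ge_mul h (ge_refl y))

lemma nu_sq_add (x y : F) : nu ((x + y) * (x + y)) = nu (x * x + y * y) := by
  have e1 : (x + y) * (x + y) = (x * x + y * y) + (x * y + y * x) := by ring
  rw [e1, nu_add_eq_left]
  exact ge_add (ge_sq_add_sq_mul x y)
    (ge_congr rfl (by rw [mul_comm]) (ge_sq_add_sq_mul x y))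

section Bilinear
variable {V : Type*} [AddCommMonoid V] [Module F V] {B : V → V → F} (hs : IsStrict F B)
include hs

lemma B_add_left (v w x : V) : B (v + w) x = B v x + B w x := by
  have := hs 1 1 1 0 v w x x
  simpa using this

lemma B_add_right (v w x : V) : B x (v + w) = B x v + B x w := by
  have := hs 1 0 1 1 x x v w
  simpa using this

lemma B_smul_left (a : F) (v x : V) : B (a • v) x = a * B v x := by
  have := hs a 0 1 0 v v x x
  simpa using this

lemma B_smul_right (a : F) (v x : V) : B x (a • v) = a * B x v := by
  have := hs 1 0 a 0 x x v v
  simpa using this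

lemma B_zero_left (x : V) : B 0 x = 0 := by
  have := B_smul_left hs 0 0 x
  simpa using this

lemma B_zero_right (x : V) : B x 0 = 0 := by
  have := B_smul_right hs 0 0 x
  simpa using this

lemma B_sum_left {ι : Type*} (s : Finset ι) (f : ι → V) (x : V) :
    B (∑ i ∈ s, f i) x = ∑ i ∈ s, B (f i) x := by
  classical
  induction s using Finset.induction_on with
  | empty => simpa using B_zero_left hs x
  | @insert j s' hx ih =>
      rw [Finset.sum_insert hx, Finset.sum_insert hx, B_add_left hs, ih]

lemma B_sum_right {ι : Type*} (s : Finset ι) (f : ι → V) (x : V) :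
    B x (∑ i ∈ s, f i) = ∑ i ∈ s, B x (f i) := by
  classical
  induction s using Finset.induction_on with
  | empty => simpa using B_zero_right hs x
  | @insert j s' hx ih =>
      rw [Finset.sum_insert hx, Finset.sum_insert hx, B_add_right hs, ih]

end Bilinear


end Supertropical

open Supertropical in
/-- STATEMENT 15: With a strict supertropically symmetric bilinear form and
`b₁,…,b_m` as in the Gram-Schmidt procedure (pairwise g-orthogonal, pairwise
weakly Cauchy-Schwartz, `⟨bⱼ,bⱼ⟩ ≠ 0`, `βⱼ ≅_ν ⟨bⱼ,bⱼ⟩` tangible), if `v` is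
g-nonisotropic and `⟨v,v⟩ >_ν Σⱼ (⟨v,bⱼ⟩ + ⟨bⱼ,v⟩)²/βⱼ` — which holds in
particular when `{v, bⱼ}` is Cauchy-Schwartz for every `j` — then
`⟨v′,v′⟩ = ⟨v,v⟩`; in particular `v′` is g-nonisotropic. -/
theorem stmt15 {F : Type*} [SupertropicalSemifield F]
    {V : Type*} [AddCommMonoid V] [Module F V]
    (B : V → V → F) (hB : IsBilinear F B) (hstrict : IsStrict F B)
    (hsym : SupSymmetric F B)
    {m : ℕ} (b : Fin m → V)
    (horth : ∀ i j, i ≠ j → Ghost0 F (B (b i) (b j)))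
    (hnz : ∀ j, B (b j) (b j) ≠ 0)
    (hwcs : ∀ i j, i ≠ j → WeakCS F B (b i) (b j))
    (β βinv : Fin m → F)
    (hβt : ∀ j, Tangible F (β j))
    (hβν : ∀ j, nuEq F (β j) (B (b j) (b j)))
    (hβinv : ∀ j, β j * βinv j = 1)
    (v : V) (hv : Tangible F (B v v)) :
    (nuGT F (B v v) (∑ j, (B v (b j) + B (b j) v) ^ 2 * βinv j) →
      B (v + ∑ j, (B v (b j) * βinv j) • b j) (v + ∑ j, (B v (b j) * βinv j) • b j) = B v v ∧
        Tangible F (B (v + ∑ j, (B v (b j) * βinv j) • b j)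
          (v + ∑ j, (B v (b j) * βinv j) • b j))) ∧
    ((∀ j, CS F B v (b j)) →
      nuGT F (B v v) (∑ j, (B v (b j) + B (b j) v) ^ 2 * βinv j)) := by
  classical
  set X : Fin m → F := fun j => B v (b j) with hX
  set Y : Fin m → F := fun j => B (b j) v with hY
  set c : Fin m → F := fun j => X j * βinv j with hc
  set S : F := ∑ j, (X j + Y j) ^ 2 * βinv j with hS
  set w : V := ∑ j, c j • b j with hw
  -- basic nonvanishing facts
  have hβinv0 : ∀ j, nu (βinv j) ≠ 0 := by
    intro j h0
    apply nu_one_ne_zero hv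
    rw [← hβinv j, nu_mul, h0, mul_zero]
  -- ν(z * B_jj * βinv j) = ν z
  have nuβ : ∀ (j : Fin m) (z : F), nu (z * B (b j) (b j) * βinv j) = nu z := by
    intro j z
    have hb : nu (B (b j) (b j)) = nu (β j) := (hβν j).symm
    rw [nu_mul, nu_mul, hb, ← nu_mul, ← nu_mul, mul_assoc, hβinv j, mul_one]
  -- square expansion bounds
  have sqX : ∀ j, nuGE F ((X j + Y j) ^ 2) (X j * X j) := by
    intro j
    have e : (X j + Y j) ^ 2 = X j * X j + (X j * Y j + (Y j * X j + Y j * Y j)) := by ring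
    rw [e]; exact ge_add_left _ _
  have sqXY : ∀ j, nuGE F ((X j + Y j) ^ 2) (X j * Y j) := by
    intro j
    have e : (X j + Y j) ^ 2 = X j * Y j + (X j * X j + (Y j * X j + Y j * Y j)) := by ring
    rw [e]; exact ge_add_left _ _
  have hSt : ∀ j, nuGE F S ((X j + Y j) ^ 2 * βinv j) :=
    fun j => ge_sum_term (Finset.mem_univ j)
  constructor
  · -- main implication
    intro hgt
    -- expansion of B (v+w) (v+w)
    have hBvw : B v w = ∑ j, c j * X j := by
      rw [hw, B_sum_right hstrict]
      refine Finset.sum_congr rfl fun j _ => ?_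
      rw [B_smul_right hstrict]
    have hBwv : B w v = ∑ j, c j * Y j := by
      rw [hw, B_sum_left hstrict]
      refine Finset.sum_congr rfl fun j _ => ?_
      rw [B_smul_left hstrict]
    have hBww : B w w = ∑ i, ∑ j, c i * (c j * B (b i) (b j)) := by
      rw [hw, B_sum_left hstrict]
      refine Finset.sum_congr rfl fun i _ => ?_
      rw [B_smul_left hstrict, B_sum_right hstrict, Finset.mul_sum]
      refine Finset.sum_congr rfl fun j _ => ?_
      rw [B_smul_right hstrict]
    have expand : B (v + w) (v + w) = B v v + (B v w + (B w v + B w w)) := by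
      rw [B_add_left hstrict, B_add_right hstrict, B_add_right hstrict]
      ring
    -- bound each piece by S
    have hvw : nuGE F S (B v w) := by
      rw [hBvw]
      refine ge_sum fun j _ => ?_
      have e : c j * X j = X j * X j * βinv j := by rw [hc]; ring
      rw [e]
      exact ge_trans (hSt j) (ge_mul (sqX j) (ge_refl (βinv j)))
    have hwv : nuGE F S (B w v) := by
      rw [hBwv]
      refine ge_sum fun j _ => ?_
      have e : c j * Y j = X j * Y j * βinv j := by rw [hc]; ring
      rw [e]
      exact ge_trans (hSt j) (ge_mul (sqXY j) (ge_refl (βinv j)))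
    have hww : nuGE F S (B w w) := by
      rw [hBww]
      refine ge_sum fun i _ => ge_sum fun j _ => ?_
      by_cases hij : i = j
      · subst hij
        -- diagonal term
        have e : c i * (c i * B (b i) (b i)) =
            X i * X i * βinv i * (B (b i) (b i)) * βinv i := by rw [hc]; ring
        have hnu : nu (c i * (c i * B (b i) (b i))) = nu (X i * X i * βinv i) := by
          rw [e]; exact nuβ i (X i * X i * βinv i)
        refine ge_congr rfl hnu.symm ?_
        exact ge_trans (hSt i) (ge_mul (sqX i) (ge_refl (βinv i)))
      · -- off-diagonal term; use the square trick
        set g : F := B (b i) (b j) with hg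
        set T : F := c i * (c j * g) with hT
        have hwij : nuGE F (B (b i) (b i) * B (b j) (b j)) (g * g) := by
          have := hwcs i j hij
          unfold WeakCS at this
          refine ge_trans this ?_
          have e : B (b i) (b j) ^ 2 + B (b j) (b i) ^ 2 =
              g * g + B (b j) (b i) ^ 2 := by rw [hg]; ring
          rw [e]
          exact ge_add_left _ _
        have hone : nuGE F 1 (g * g * (βinv i * βinv j)) := by
          have h1 : nuGE F (B (b i) (b i) * B (b j) (b j) * (βinv i * βinv j))
              (g * g * (βinv i * βinv j)) := ge_mul hwij (ge_refl _)
          have hnu1 : nu (B (b i) (b i) * B (b j) (b j) * (βinv i * βinv j)) =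
              nu (1 : F) := by
            have e : B (b i) (b i) * B (b j) (b j) * (βinv i * βinv j) =
                (1 * B (b i) (b i) * βinv i) * (1 * B (b j) (b j) * βinv j) := by ring
            rw [e, nu_mul, nuβ i 1, nuβ j 1, ← nu_mul, mul_one]
          exact ge_congr hnu1 rfl h1
        have hstep : nuGE F (S * S) (T * T) := by
          have h2 : nuGE F (S * S)
              ((X i + Y i) ^ 2 * βinv i * ((X j + Y j) ^ 2 * βinv j)) :=
            ge_mul (hSt i) (hSt j)
          have h3 : nuGE F ((X i + Y i) ^ 2 * βinv i * ((X j + Y j) ^ 2 * βinv j))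
              (X i * X i * βinv i * (X j * X j * βinv j)) :=
            ge_mul (ge_mul (sqX i) (ge_refl _)) (ge_mul (sqX j) (ge_refl _))
          have h4 : nuGE F (X i * X i * βinv i * (X j * X j * βinv j) * 1)
              (X i * X i * βinv i * (X j * X j * βinv j) * (g * g * (βinv i * βinv j))) :=
            ge_mul (ge_refl _) hone
          have e1 : X i * X i * βinv i * (X j * X j * βinv j) * 1 =
              X i * X i * βinv i * (X j * X j * βinv j) := mul_one _
          have e2 : X i * X i * βinv i * (X j * X j * βinv j) * (g * g * (βinv i * βinv j)) =
              T * T := by rw [hT, hc]; ring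
          rw [e1, e2] at h4
          exact ge_trans (ge_trans h2 h3) h4
        exact ge_of_sq hstep
    have hE : nuGE F S (B v w + (B w v + B w w)) := ge_add hvw (ge_add hwv hww)
    have hgtE : nuGT F (B v v) (B v w + (B w v + B w w)) := gt_of_gt_ge hgt hE
    have heq : B (v + w) (v + w) = B v v := by rw [expand, add_of_gt hgtE]
    exact ⟨heq, by rw [heq]; exact hv⟩
  · -- Cauchy-Schwartz implies the hypothesis
    intro hcs
    have hBvv0 : nu (B v v) ≠ 0 := nu_tangible_ne_zero hv hv
    refine gt_sum hBvv0 fun j _ => ?_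
    have h1 : nuGT F (B v v * B (b j) (b j)) (B v (b j) ^ 2 + B (b j) v ^ 2) := hcs j
    have h2 := gt_mul_right (hβinv0 j) h1
    have hl : nu (B v v * B (b j) (b j) * βinv j) = nu (B v v) := nuβ j (B v v)
    have hr : nu ((B v (b j) ^ 2 + B (b j) v ^ 2) * βinv j) =
        nu ((B v (b j) + B (b j) v) ^ 2 * βinv j) := by
      rw [nu_mul, nu_mul]
      have h3 : nu (X j ^ 2 + Y j ^ 2) = nu ((X j + Y j) ^ 2) := by
        rw [pow_two (X j), pow_two (Y j), pow_two (X j + Y j), nu_sq_add]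
      rw [h3]
    exact gt_congr hl hr h2
end
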